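/- arXiv:0804.3464 — 4 statements merged into one kernel-verified Lean document; each statement's English description precedes it below -/
import Mathlib

section
/- Let T be a bounded operator on a Hilbert space and let λ be an isolated point of the spectrum of T that is an eigenvalue of a normal operator T. Then the Riesz projection P = (1/2πi) ∮_{C_λ} (ξ - T)^{-1} dξ, where C_λ is a small circle around λ containing no other spectral points, equals the orthogonal projection onto the λ-eigenspace of T. -/
open Metric Set Filter Real MeasureTheory

/-!
Inside the continuous functional calculus of the normal operator `T` the resolvent is
`(ξ - T)⁻¹ = cfc (ξ - ·)⁻¹ T`, and the contour integral commutes with `cfc`. Hence the Riesz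
projection is `cfc χ T`, where `χ z = (2πi)⁻¹ ∮ (ξ - z)⁻¹ dξ` is the winding number of `C_λ`
around `z`; on the spectrum this is the indicator of `{λ}`. Since `χ` is real and idempotent,
`cfc χ T` is an orthogonal projection. Its range is `ker (T - λ)`: one inclusion because
`(z - λ) χ z = 0`, the other because `1 - χ z = (z - λ)⁻¹ (z - λ)`, where `(z - λ)⁻¹` is
continuous on the spectrum as `λ` is isolated.
-/

theorem circleIntegral_sub_inv_of_notMem_closedBall {c z : ℂ} {R : ℝ} (hR : 0 ≤ R)
    (hz : z ∉ closedBall c R) : ∮ ξ in C(c, R), (ξ - z)⁻¹ = 0 := by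
  have hne : ∀ ξ ∈ closedBall c R, ξ - z ≠ 0 := fun ξ hξ => sub_ne_zero.2 fun h => hz (h ▸ hξ)
  refine Complex.circleIntegral_eq_zero_of_differentiable_on_off_countable hR countable_empty
    ((continuousOn_id.sub continuousOn_const).inv₀ hne) fun ξ hξ => ?_
  exact (differentiableAt_id.sub_const z).inv (hne ξ (ball_subset_closedBall hξ.1))

section IsolatedPoint

variable {X : Type*}

theorem ContinuousOn.of_sdiff_singleton [TopologicalSpace X] [T1Space X] {Y : Type*}
    [TopologicalSpace Y] {f : X → Y} {s : Set X} {x : X} (hx : ¬AccPt x (𝓟 s))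
    (hf : ContinuousOn f (s \ {x})) : ContinuousOn f s := by
  intro y hy
  rcases eq_or_ne y x with rfl | hyx
  · exact continuousWithinAt_of_not_accPt hx
  · exact continuousWithinAt_sdiff_singleton.1 (hf y ⟨hy, hyx⟩)

theorem continuousOn_single_of_not_accPt [TopologicalSpace X] [T1Space X] [DecidableEq X]
    {M : Type*} [TopologicalSpace M] [Zero M] {s : Set X} {x : X} (hx : ¬AccPt x (𝓟 s))
    (m : M) : ContinuousOn (Pi.single x m) s :=
  .of_sdiff_singleton hx <| (continuousOn_const (c := 0)).congr fun _ hy =>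
    Pi.single_eq_of_ne (M := fun _ => M) hy.2 m

theorem continuousOn_sub_inv_of_not_accPt {𝕜 : Type*} [NontriviallyNormedField 𝕜] {s : Set 𝕜}
    {x : 𝕜} (hx : ¬AccPt x (𝓟 s)) : ContinuousOn (fun z => (z - x)⁻¹) s :=
  .of_sdiff_singleton hx <| (continuousOn_id.sub continuousOn_const).inv₀ fun _ hy =>
    sub_ne_zero.2 hy.2

variable [PseudoMetricSpace X] {s : Set X} {x : X} {r : ℝ}

theorem not_accPt_of_inter_closedBall_eq_singleton (hr : 0 < r)
    (h : s ∩ closedBall x r = {x}) : ¬AccPt x (𝓟 s) := by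
  rw [accPt_iff_nhds]
  push Not
  exact ⟨closedBall x r, closedBall_mem_nhds x hr, fun y hy => h.subset ⟨hy.2, hy.1⟩⟩

theorem disjoint_sphere_of_inter_closedBall_eq_singleton (hr : 0 < r)
    (h : s ∩ closedBall x r = {x}) : Disjoint (sphere x r) s := by
  refine disjoint_left.2 fun y hy hys => ?_
  obtain rfl : y = x := h.subset ⟨hys, sphere_subset_closedBall hy⟩
  simp [hr.ne] at hy

theorem circleIntegral_sub_inv_eqOn_single {s : Set ℂ} {c : ℂ} {R : ℝ} (hR : 0 < R)
    (h : s ∩ closedBall c R = {c}) :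
    EqOn (fun z => ∮ ξ in C(c, R), (ξ - z)⁻¹)
      (fun z => 2 * π * Complex.I * (Pi.single c 1 : ℂ → ℂ) z) s := fun z hz => by
  rcases eq_or_ne z c with rfl | hne
  · simp [circleIntegral.integral_sub_inv_of_mem_ball (mem_ball_self hR)]
  · simp [hne, circleIntegral_sub_inv_of_notMem_closedBall hR.le
      fun hz' => hne (h.subset ⟨hz, hz'⟩)]

end IsolatedPoint

section CFC

variable {A : Type*} {p : A → Prop} [NormedRing A] [StarRing A] [NormedAlgebra ℂ A]
  [ContinuousFunctionalCalculus ℂ A p]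

theorem ringInverse_smul_one_sub_eq_cfc {a : A} {ξ : ℂ} (hξ : ξ ∉ spectrum ℂ a)
    (ha : p a := by cfc_tac) : Ring.inverse (ξ • 1 - a) = cfc (fun z => (ξ - z)⁻¹) a := by
  rw [cfc_inv (fun z => ξ - z) a fun z hz => sub_ne_zero.2 (ne_of_mem_of_not_mem hz hξ).symm,
    cfc_sub _ _ a, cfc_const ξ a, cfc_id' ℂ a, Algebra.algebraMap_eq_smul_one]

theorem cfc_circleIntegral [CompleteSpace A] (f : ℂ → ℂ → ℂ) (a : A) (c : ℂ) (R : ℝ)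
    (hf : ContinuousOn (Function.uncurry f) (sphere c |R| ×ˢ spectrum ℂ a))
    (ha : p a := by cfc_tac) :
    cfc (fun z => ∮ ξ in C(c, R), f ξ z) a = ∮ ξ in C(c, R), cfc (f ξ) a := by
  let g : ℝ → ℂ → ℂ := fun θ z => deriv (circleMap c R) θ • f (circleMap c R θ) z
  have hf_circ : ContinuousOn (fun q : ℝ × ℂ => f (circleMap c R q.1) q.2)
      (univ ×ˢ spectrum ℂ a) :=
    hf.comp (f := fun q : ℝ × ℂ => (circleMap c R q.1, q.2)) (by fun_prop) fun q hq =>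
      ⟨circleMap_mem_sphere' c R q.1, hq.2⟩
  have hg : ContinuousOn (Function.uncurry g) (Ioc 0 (2 * π) ×ˢ spectrum ℂ a) := by
    simp only [g, deriv_circleMap]
    exact ((by fun_prop : Continuous fun q : ℝ × ℂ => circleMap 0 R q.1 * Complex.I)
      |>.continuousOn.smul hf_circ).mono (prod_mono (subset_univ _) subset_rfl)
  obtain ⟨M, hM⟩ :=
    ((isCompact_sphere c |R|).prod (spectrum.isCompact a)).exists_bound_of_continuousOn hf
  have hg_le : ∀ θ, ∀ z ∈ spectrum ℂ a, ‖g θ z‖ ≤ |R| * M := fun θ z hz => by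
    simp only [g, deriv_circleMap, norm_smul, norm_mul, norm_circleMap_zero, Complex.norm_I,
      mul_one]
    exact mul_le_mul_of_nonneg_left (hM (circleMap c R θ, z)
      ⟨circleMap_mem_sphere' c R θ, hz⟩) (abs_nonneg R)
  simp only [circleIntegral, intervalIntegral.integral_of_le Real.two_pi_pos.le]
  rw [cfc_setIntegral measurableSet_Ioc g (fun _ => |R| * M) a hg
    (ae_of_all _ fun θ => hg_le θ) (hasFiniteIntegral_const _) ha]
  refine setIntegral_congr_fun measurableSet_Ioc fun θ _ => cfc_smul _ _ _ ?_
  exact hf.comp (Continuous.prodMk_right _).continuousOn fun z hz =>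
    ⟨circleMap_mem_sphere' c R θ, hz⟩

theorem isStarProjection_cfc {f : ℂ → ℂ} (a : A)
    (hf₀₁ : ∀ z ∈ spectrum ℂ a, f z = 0 ∨ f z = 1)
    (hf : ContinuousOn f (spectrum ℂ a) := by cfc_cont_tac) : IsStarProjection (cfc f a) where
  isIdempotentElem := by
    rw [IsIdempotentElem, ← cfc_mul f f a]
    exact cfc_congr fun z hz => by rcases hf₀₁ z hz with h | h <;> simp [h]
  isSelfAdjoint := by
    rw [IsSelfAdjoint, ← cfc_star]
    exact cfc_congr fun z hz => by rcases hf₀₁ z hz with h | h <;> simp [h]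

variable {a : A} {lam : ℂ} (hlam : ¬AccPt lam (𝓟 (spectrum ℂ a)))
include hlam

theorem sub_algebraMap_mul_cfc_single (ha : p a := by cfc_tac) :
    (a - algebraMap ℂ A lam) * cfc (Pi.single lam 1) a = 0 := by
  have hδ := continuousOn_single_of_not_accPt hlam (1 : ℂ)
  have hmul : cfc (fun z => (z - lam) * (Pi.single lam 1 : ℂ → ℂ) z) a =
      (a - algebraMap ℂ A lam) * cfc (Pi.single lam 1) a := by
    rw [cfc_mul .., cfc_sub .., cfc_id' .., cfc_const ..]
  rw [← hmul, ← cfc_zero ℂ a]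
  refine cfc_congr fun z _ => ?_
  by_cases hz : z = lam <;> simp [hz]

theorem one_sub_cfc_single (ha : p a := by cfc_tac) :
    1 - cfc (Pi.single lam 1) a = cfc (fun z => (z - lam)⁻¹) a * (a - algebraMap ℂ A lam) := by
  have hδ := continuousOn_single_of_not_accPt hlam (1 : ℂ)
  have hinv := continuousOn_sub_inv_of_not_accPt hlam
  have hmul : cfc (fun z => (z - lam)⁻¹ * (z - lam)) a =
      cfc (fun z => (z - lam)⁻¹) a * (a - algebraMap ℂ A lam) := by
    rw [cfc_mul .., cfc_sub .., cfc_id' .., cfc_const ..]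
  rw [← hmul, ← cfc_one ℂ a, ← cfc_sub ..]
  refine cfc_congr fun z _ => ?_
  -- at `z = lam` both sides vanish, the right one because `0⁻¹ = 0`
  by_cases hz : z = lam
  · simp [hz]
  · simp [hz, inv_mul_cancel₀ (sub_ne_zero.2 hz)]

end CFC

theorem range_cfc_single_eq_eigenspace {H : Type*} [NormedAddCommGroup H]
    [InnerProductSpace ℂ H] [CompleteSpace H] (T : H →L[ℂ] H) [IsStarNormal T] {lam : ℂ}
    (hlam : ¬AccPt lam (𝓟 (spectrum ℂ T))) :
    (cfc (Pi.single lam 1) T).range = Module.End.eigenspace (T : H →ₗ[ℂ] H) lam := by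
  ext x
  rw [Module.End.mem_eigenspace_iff]
  constructor
  · rintro ⟨y, rfl⟩
    have := congr($(sub_algebraMap_mul_cfc_single hlam) y)
    simp only [Algebra.algebraMap_eq_smul_one, mul_apply_eq_comp, sub_apply, smul_apply,
      one_apply_eq_self, zero_apply, sub_eq_zero] at this
    exact this
  · intro hx
    have hx' : T x = lam • x := hx
    have := congr($(one_sub_cfc_single hlam) x)
    simp only [sub_apply, one_apply_eq_self, Algebra.algebraMap_eq_smul_one, mul_apply_eq_comp,
      hx', smul_apply, sub_self, map_zero, sub_eq_zero] at this
    exact ⟨x, this.symm⟩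

theorem riesz_projection_eq_orthogonalProjection_general
    {H : Type*} [NormedAddCommGroup H] [InnerProductSpace ℂ H] [CompleteSpace H]
    (T : H →L[ℂ] H) (hT : IsStarNormal T)
    (lam : ℂ)
    (r : ℝ) (hr : 0 < r)
    (hiso : spectrum ℂ T ∩ Metric.closedBall lam r = {lam})
    (K : Submodule ℂ H) (hK : K = Module.End.eigenspace (↑T : H →ₗ[ℂ] H) lam)
    [K.HasOrthogonalProjection] :
    (2 * (Real.pi : ℂ) * Complex.I)⁻¹ •
        (∮ ξ in C(lam, r), Ring.inverse (ξ • (1 : H →L[ℂ] H) - T)) =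
      K.subtypeL.comp K.orthogonalProjectionOnto := by
  have hlam := not_accPt_of_inter_closedBall_eq_singleton hr hiso
  have hsphere := disjoint_sphere_of_inter_closedBall_eq_singleton hr hiso
  have hres : ContinuousOn (fun q : ℂ × ℂ => (q.1 - q.2)⁻¹) (sphere lam |r| ×ˢ spectrum ℂ T) :=
    (continuousOn_fst.sub continuousOn_snd).inv₀ fun q hq => sub_ne_zero.2 fun h =>
      hsphere.notMem_of_mem_left (by simpa [abs_of_pos hr] using hq.1) (h ▸ hq.2)
  have hδ := continuousOn_single_of_not_accPt hlam (1 : ℂ)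
  have hP : IsStarProjection (cfc (Pi.single lam 1) T) :=
    isStarProjection_cfc T fun z _ => by by_cases hz : z = lam <;> simp [hz]
  calc _ = (2 * (π : ℂ) * Complex.I)⁻¹ • cfc (fun z => ∮ ξ in C(lam, r), (ξ - z)⁻¹) T := by
        rw [circleIntegral.integral_congr hr.le fun ξ hξ =>
            ringInverse_smul_one_sub_eq_cfc (hsphere.notMem_of_mem_left hξ) hT,
          ← cfc_circleIntegral (fun ξ z => (ξ - z)⁻¹) T lam r hres hT]
    _ = cfc (Pi.single lam 1) T := by
        rw [cfc_congr (circleIntegral_sub_inv_eqOn_single hr hiso), cfc_const_mul .., smul_smul,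
          inv_mul_cancel₀ Complex.two_pi_I_ne_zero, one_smul]
    _ = K.starProjection :=
        ContinuousLinearMap.IsStarProjection.ext hP isStarProjection_starProjection <| by
          rw [range_cfc_single_eq_eigenspace T hlam, Submodule.range_starProjection, hK]

/-- For a bounded normal operator `T` on a complex Hilbert space and an isolated
point `λ` of its spectrum which is an eigenvalue, the Riesz projection
`(2πi)⁻¹ ∮_{C_λ} (ξ - T)⁻¹ dξ` (over a small circle around `λ` containing no other spectral
point) equals the orthogonal projection onto the `λ`-eigenspace of `T`. -/
theorem riesz_projection_eq_orthogonalProjection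
    {H : Type*} [NormedAddCommGroup H] [InnerProductSpace ℂ H] [CompleteSpace H]
    (T : H →L[ℂ] H) (hT : IsStarNormal T)
    (lam : ℂ) (hlam : lam ∈ spectrum ℂ T)
    (heig : Module.End.HasEigenvalue (↑T : H →ₗ[ℂ] H) lam)
    (r : ℝ) (hr : 0 < r)
    (hiso : spectrum ℂ T ∩ Metric.closedBall lam r = {lam})
    (K : Submodule ℂ H) (hK : K = Module.End.eigenspace (↑T : H →ₗ[ℂ] H) lam)
    [K.HasOrthogonalProjection] :
    (2 * (Real.pi : ℂ) * Complex.I)⁻¹ •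
        (∮ ξ in C(lam, r), Ring.inverse (ξ • (1 : H →L[ℂ] H) - T)) =
      K.subtypeL.comp K.orthogonalProjectionOnto :=
  riesz_projection_eq_orthogonalProjection_general T hT lam r hr hiso K hK
end

section
/- Let P₁, …, Pₙ be smooth families of mutually orthogonal projections with ΣPᵢ = 1 and fix distinct indices i, k. Then the matrix-valued 2-form Σ_{j,l} λⱼλₗ tr(Pᵢ dPⱼ Pₖ dPₗ) equals (λᵢ - λₖ)² tr(Pᵢ dPₖ dPₖ). -/
/-!
Write `dΛ = Σⱼ λⱼ dPⱼ`. Differentiating `PⱼPₗ = δⱼₗPⱼ` shows that the off-diagonal block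
`Pᵢ dΛ Pₖ` equals `(λₖ - λᵢ) Pᵢ dPₖ`, and likewise `Pₖ dΛ Pᵢ = (λᵢ - λₖ) Pₖ dPᵢ = (λₖ - λᵢ) dPₖ Pᵢ`.
By cyclicity of the trace the double sum is `tr(Pᵢ dΛ Pₖ dΛ) = tr((Pᵢ dΛ Pₖ)(Pₖ dΛ Pᵢ))`, which
is therefore `(λᵢ - λₖ)² tr(Pᵢ dPₖ dPₖ Pᵢ) = (λᵢ - λₖ)² tr(Pᵢ dPₖ dPₖ)`.
-/

noncomputable def trL {H : Type*} [NormedAddCommGroup H] [InnerProductSpace ℂ H]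
    (T : H →L[ℂ] H) : ℂ :=
  LinearMap.trace ℂ H T.toLinearMap

section TangentFamily

variable {R A ι : Type*} [CommRing R] [Ring A] [Algebra R A] [DecidableEq ι]

/-- The linearization at `Q` of the relations `Qₐ Q_b = δₐ_b Qₐ` in the direction `D`. -/
def IsTangentFamily (Q D : ι → A) : Prop :=
  ∀ a b, D a * Q b + Q a * D b = if a = b then D a else 0

variable {Q D D' : ι → A}

namespace IsTangentFamily

theorem mul_mul_eq_ite (hQ : ∀ a b, Q a * Q b = if a = b then Q a else 0)
    (hD : IsTangentFamily Q D) (i j k : ι) :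
    Q i * D j * Q k = (if j = k then Q i * D k else 0) - if i = j then Q i * D k else 0 := by
  rw [mul_assoc, eq_sub_of_add_eq (hD j k), mul_sub, ← mul_assoc, hQ]
  split_ifs with hjk hij <;> subst_vars <;> simp

theorem mul_sum_smul_mul [Fintype ι] (hQ : ∀ a b, Q a * Q b = if a = b then Q a else 0)
    (hD : IsTangentFamily Q D) (lam : ι → R) (i k : ι) :
    Q i * (∑ j, lam j • D j) * Q k = (lam k - lam i) • (Q i * D k) := by
  simp only [Finset.mul_sum, Finset.sum_mul, mul_smul_comm, smul_mul_assoc,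
    hD.mul_mul_eq_ite hQ, smul_sub, smul_ite, smul_zero, Finset.sum_sub_distrib,
    Finset.sum_ite_eq', Finset.sum_ite_eq, Finset.mem_univ, if_true, sub_smul]

theorem mul_eq_neg_mul_of_ne (hD : IsTangentFamily Q D) {i k : ι} (hik : i ≠ k) :
    Q i * D k = -(D i * Q k) :=
  eq_neg_of_add_eq_zero_right (by simpa [hik] using hD i k)

end IsTangentFamily

theorem map_mul_mul_self_of_isIdempotentElem {τ : A →ₗ[R] R}
    (hτ : ∀ x y, τ (x * y) = τ (y * x)) {q : A} (hq : IsIdempotentElem q) (x : A) :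
    τ (q * x * q) = τ (q * x) := by
  rw [hτ, ← mul_assoc, hq.eq]

theorem IsTangentFamily.sum_sum_map_mul_mul_mul [Fintype ι] {τ : A →ₗ[R] R}
    (hτ : ∀ x y, τ (x * y) = τ (y * x))
    (hQ : ∀ a b, Q a * Q b = if a = b then Q a else 0)
    (hD : IsTangentFamily Q D) (hD' : IsTangentFamily Q D') (lam : ι → R) {i k : ι}
    (hik : i ≠ k) :
    ∑ j, ∑ l, lam j * lam l * τ (Q i * D j * Q k * D' l) =
      (lam i - lam k) ^ 2 * τ (Q i * D k * D' k) := by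
  have hidem (a : ι) : IsIdempotentElem (Q a) := (hQ a a).trans (if_pos rfl)
  set X := ∑ j, lam j • D j
  set Y := ∑ l, lam l • D' l
  calc ∑ j, ∑ l, lam j * lam l * τ (Q i * D j * Q k * D' l)
      = τ (Q i * X * Q k * Y) := by
        simp only [X, Y, Finset.mul_sum, Finset.sum_mul, mul_smul_comm, smul_mul_assoc, map_sum,
          map_smul, smul_eq_mul, mul_assoc]
        exact Finset.sum_comm.trans <|
          Finset.sum_congr rfl fun _ _ => Finset.sum_congr rfl fun _ _ => mul_left_comm _ _ _
    _ = τ ((Q i * X * Q k) * (Q k * Y * Q i)) := by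
        rw [show (Q i * X * Q k) * (Q k * Y * Q i) = Q i * (X * (Q k * Q k) * Y) * Q i by
          noncomm_ring, (hidem k).eq, map_mul_mul_self_of_isIdempotentElem hτ (hidem i)]
        simp only [mul_assoc]
    _ = (lam k - lam i) * (lam i - lam k) * τ (Q i * D k * (Q k * D' i)) := by
        rw [hD.mul_sum_smul_mul hQ, hD'.mul_sum_smul_mul hQ, smul_mul_smul_comm, map_smul,
          smul_eq_mul, mul_assoc (Q i)]
    _ = (lam i - lam k) ^ 2 * τ (Q i * D k * D' k) := by
        rw [hD'.mul_eq_neg_mul_of_ne hik.symm, mul_neg, map_neg, ← mul_assoc, mul_assoc (Q i),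
          map_mul_mul_self_of_isIdempotentElem hτ (hidem i), ← mul_assoc]
        ring

end TangentFamily

section Derivative

variable {𝕜 E A ι : Type*} [NontriviallyNormedField 𝕜] [NormedAddCommGroup E] [NormedSpace 𝕜 E]
  [NormedRing A] [NormedAlgebra 𝕜 A] [DecidableEq ι]

theorem isTangentFamily_fderiv {P : ι → E → A} {m : E} (hP : ∀ a, DifferentiableAt 𝕜 (P a) m)
    (horth : ∀ a b x, P a x * P b x = if a = b then P a x else 0) (u : E) :
    IsTangentFamily (fun a => P a m) (fun a => fderiv 𝕜 (P a) m u) := by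
  intro a b
  have h := congrArg (· u) (fderiv_mul' (hP a) (hP b))
  rw [show P a * P b = fun x => if a = b then P a x else 0 from funext (horth a b)] at h
  split_ifs at h ⊢ with hab
  · subst hab
    simpa [add_comm] using h.symm
  · simpa [add_comm] using h.symm

end Derivative

section Trace

variable {H : Type*} [NormedAddCommGroup H] [InnerProductSpace ℂ H]

noncomputable def trLinearMap : (H →L[ℂ] H) →ₗ[ℂ] ℂ :=
  LinearMap.trace ℂ H ∘ₗ ContinuousLinearMap.coeLM ℂ

theorem trLinearMap_apply (T : H →L[ℂ] H) : trLinearMap T = trL T := rfl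

theorem trLinearMap_mul_comm [FiniteDimensional ℂ H] (S T : H →L[ℂ] H) :
    trLinearMap (S * T) = trLinearMap (T * S) :=
  LinearMap.trace_mul_comm ℂ S.toLinearMap T.toLinearMap

end Trace

theorem two_form_sum_eq_general
    {E H : Type*} [NormedAddCommGroup E] [NormedSpace ℝ E]
    [NormedAddCommGroup H] [InnerProductSpace ℂ H] [FiniteDimensional ℂ H]
    {n : ℕ} (P : Fin n → E → (H →L[ℂ] H)) (lam : Fin n → ℂ)
    (hPdiff : ∀ i, Differentiable ℝ (P i))
    (horth : ∀ i j m, P i m * P j m = if i = j then P i m else 0)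
    (i k : Fin n) (hik : i ≠ k) (m v w : E) :
    (∑ j, ∑ l, lam j * lam l *
        (trL (P i m * (fderiv ℝ (P j) m v) * P k m * (fderiv ℝ (P l) m w)) -
          trL (P i m * (fderiv ℝ (P j) m w) * P k m * (fderiv ℝ (P l) m v)))) =
      (lam i - lam k) ^ 2 *
        (trL (P i m * (fderiv ℝ (P k) m v) * (fderiv ℝ (P k) m w)) -
          trL (P i m * (fderiv ℝ (P k) m w) * (fderiv ℝ (P k) m v))) := by
  have hdP (u : E) := isTangentFamily_fderiv (fun a => hPdiff a m) horth u
  have key (u u' : E) := (hdP u).sum_sum_map_mul_mul_mul trLinearMap_mul_comm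
    (fun a b => horth a b m) (hdP u') lam hik
  simp only [trLinearMap_apply] at key
  simp only [mul_sub, Finset.sum_sub_distrib, key]

/-- For smooth mutually orthogonal projections `P₁,…,Pₙ` with `ΣPᵢ = 1`,
distinct scalars `λᵢ`, and fixed `i ≠ k`, the scalar 2-form identity
`Σ_{j,l} λⱼλₗ tr(Pᵢ dPⱼ Pₖ dPₗ) = (λᵢ - λₖ)² tr(Pᵢ dPₖ dPₖ)` holds, where products of
operator-valued 1-forms are wedge products (evaluated on tangent vectors `v, w`). -/
theorem two_form_sum_eq
    {E H : Type*} [NormedAddCommGroup E] [NormedSpace ℝ E]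
    [NormedAddCommGroup H] [InnerProductSpace ℂ H] [FiniteDimensional ℂ H]
    {n : ℕ} (P : Fin n → E → (H →L[ℂ] H)) (lam : Fin n → ℂ)
    (hdist : Function.Injective lam)
    (hPdiff : ∀ i, Differentiable ℝ (P i))
    (hsa : ∀ i m, IsSelfAdjoint (P i m))
    (horth : ∀ i j m, P i m * P j m = if i = j then P i m else 0)
    (hsum : ∀ m, ∑ i, P i m = 1)
    (i k : Fin n) (hik : i ≠ k) (m v w : E) :
    (∑ j, ∑ l, lam j * lam l *
        (trL (P i m * (fderiv ℝ (P j) m v) * P k m * (fderiv ℝ (P l) m w)) -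
          trL (P i m * (fderiv ℝ (P j) m w) * P k m * (fderiv ℝ (P l) m v)))) =
      (lam i - lam k) ^ 2 *
        (trL (P i m * (fderiv ℝ (P k) m v) * (fderiv ℝ (P k) m w)) -
          trL (P i m * (fderiv ℝ (P k) m w) * (fderiv ℝ (P k) m v))) :=
  two_form_sum_eq_general P lam hPdiff horth i k hik m v w
end

section
/- Let P₁, …, Pₙ be smooth families of mutually orthogonal projections as above with i, j, k, l four distinct indices. Then the 3-form tr(Pᵢ dPⱼ dPₖ dPₗ) vanishes identically. -/
/-- The alternation (evaluation of the 3-form built from the 3-linear expression `f`). -/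
def alt3 {E : Type*} (f : E → E → E → ℂ) (u v w : E) : ℂ :=
  f u v w - f v u w - f u w v + f v w u + f w u v - f w v u

theorem trL_mul_comm {H : Type*} [NormedAddCommGroup H] [InnerProductSpace ℂ H]
    [FiniteDimensional ℂ H] (X Y : H →L[ℂ] H) : trL (X * Y) = trL (Y * X) :=
  LinearMap.trace_mul_comm ℂ X.toLinearMap Y.toLinearMap

theorem trL_mul_mul_eq_zero {H : Type*} [NormedAddCommGroup H] [InnerProductSpace ℂ H]
    [FiniteDimensional ℂ H] {p q : H →L[ℂ] H} (h : q * p = 0) (X : H →L[ℂ] H) :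
    trL (p * X * q) = 0 := by
  rw [trL_mul_comm, ← mul_assoc, h, zero_mul]
  exact map_zero _

theorem fderiv_mul_add_mul_fderiv_of_mul_eq_zero {𝕜 E 𝔸 : Type*} [NontriviallyNormedField 𝕜]
    [NormedAddCommGroup E] [NormedSpace 𝕜 E] [NormedRing 𝔸] [NormedAlgebra 𝕜 𝔸]
    {f g : E → 𝔸} {m : E} (hf : DifferentiableAt 𝕜 f m) (hg : DifferentiableAt 𝕜 g m)
    (hfg : ∀ x, f x * g x = 0) (a : E) :
    fderiv 𝕜 f m a * g m + f m * fderiv 𝕜 g m a = 0 := by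
  have h := congrArg (fun L => L a) (fderiv_fun_mul' hf hg)
  simp only [hfg, fderiv_const_apply, zero_apply, add_apply, smul_apply, smul_eq_mul,
    MulOpposite.smul_eq_mul_unop, MulOpposite.unop_op] at h
  rw [h, add_comm]

section Ring

variable {R : Type*} [Ring R]

theorem mul_mul_eq_of_add_eq_zero {p q d e : R} (hq : IsIdempotentElem q)
    (h : d * q + p * e = 0) : p * e * q = p * e := by
  rw [eq_neg_of_add_eq_zero_right h, neg_mul, mul_assoc, hq.eq]

theorem mul_mul_mul_eq_mul_mul {p₁ p₂ p₃ p₄ a b c : R} (h₁ : p₁ * a * p₂ = p₁ * a)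
    (h₂ : p₂ * b * p₃ = p₂ * b) (h₃ : p₃ * c * p₄ = p₃ * c) :
    p₁ * a * b * c = p₁ * (a * p₂ * b * p₃ * c) * p₄ :=
  calc p₁ * a * b * c = p₁ * a * p₂ * b * c := by rw [h₁]
    _ = p₁ * a * (p₂ * b * p₃) * c := by rw [h₂]; simp only [mul_assoc]
    _ = p₁ * a * p₂ * b * (p₃ * c * p₄) := by rw [h₃]; simp only [mul_assoc]
    _ = p₁ * (a * p₂ * b * p₃ * c) * p₄ := by simp only [mul_assoc]

end Ring

theorem three_form_trace_vanishes_general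
    {E H : Type*} [NormedAddCommGroup E] [NormedSpace ℝ E]
    [NormedAddCommGroup H] [InnerProductSpace ℂ H] [FiniteDimensional ℂ H]
    {n : ℕ} (P : Fin n → E → (H →L[ℂ] H))
    (hPdiff : ∀ i, Differentiable ℝ (P i))
    (horth : ∀ i j m, P i m * P j m = if i = j then P i m else 0)
    (i j k l : Fin n) (hij : i ≠ j) (hil : i ≠ l)
    (hjk : j ≠ k) (hkl : k ≠ l) (m : E) :
    ∀ u v w : E,
      alt3 (fun a b c => trL (P i m * (fderiv ℝ (P j) m a) *
        (fderiv ℝ (P k) m b) * (fderiv ℝ (P l) m c))) u v w = 0 := by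
  have absorb : ∀ s t, s ≠ t → ∀ a,
      P s m * fderiv ℝ (P t) m a * P t m = P s m * fderiv ℝ (P t) m a := fun s t hst a =>
    mul_mul_eq_of_add_eq_zero (by simpa [IsIdempotentElem] using horth t t m)
      (fderiv_mul_add_mul_fderiv_of_mul_eq_zero (hPdiff s m) (hPdiff t m)
        (fun x => by simp [horth, hst]) a)
  have term_eq_zero : ∀ a b c, trL (P i m * fderiv ℝ (P j) m a *
      fderiv ℝ (P k) m b * fderiv ℝ (P l) m c) = 0 := fun a b c => by
    rw [mul_mul_mul_eq_mul_mul (absorb i j hij a) (absorb j k hjk b) (absorb k l hkl c)]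
    exact trL_mul_mul_eq_zero (by simpa [hil.symm] using horth l i m) _
  intro u v w
  simp only [alt3, term_eq_zero, sub_zero, add_zero]

/-- For smooth mutually orthogonal projections with `ΣPᵢ = 1` and four
pairwise distinct indices `i, j, k, l`, the 3-form `tr(Pᵢ dPⱼ dPₖ dPₗ)` vanishes. -/
theorem three_form_trace_vanishes
    {E H : Type*} [NormedAddCommGroup E] [NormedSpace ℝ E]
    [NormedAddCommGroup H] [InnerProductSpace ℂ H] [FiniteDimensional ℂ H]
    {n : ℕ} (P : Fin n → E → (H →L[ℂ] H))
    (hPdiff : ∀ i, Differentiable ℝ (P i))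
    (hsa : ∀ i m, IsSelfAdjoint (P i m))
    (horth : ∀ i j m, P i m * P j m = if i = j then P i m else 0)
    (hsum : ∀ m, ∑ i, P i m = 1)
    (i j k l : Fin n) (hij : i ≠ j) (hik : i ≠ k) (hil : i ≠ l)
    (hjk : j ≠ k) (hjl : j ≠ l) (hkl : k ≠ l) (m : E) :
    ∀ u v w : E,
      alt3 (fun a b c => trL (P i m * (fderiv ℝ (P j) m a) *
        (fderiv ℝ (P k) m b) * (fderiv ℝ (P l) m c))) u v w = 0 :=
  three_form_trace_vanishes_general P hPdiff horth i j k l hij hil hjk hkl m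
end

section
/- With mutually orthogonal smooth projections Pᵢ summing to 1 and indices i ≠ k, the 3-forms satisfy tr(dPᵢ dPₖ dPₖ) = - tr(dPₖ dPᵢ dPᵢ). -/
theorem alt3_eq_neg_of_add_cycle {ι : Type*} {F G g : ι → ι → ι → ℂ}
    (h : ∀ a b c, F a b c + G b c a = g b c a - g c a b) (u v w : ι) :
    alt3 F u v w = -alt3 G u v w := by
  unfold alt3
  linear_combination h u v w - h v u w - h u w v + h v w u + h w u v - h w v u

section TraceIdentities

variable {R M ι : Type*} [Ring R] [AddCommGroup M]

theorem commute_mul_of_mul_add_mul_eq {q y z : R} (hy : q * y + y * q = y)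
    (hz : q * z + z * q = z) : Commute q (y * z) :=
  calc q * (y * z) = (q * y) * z := (mul_assoc _ _ _).symm
    _ = y * z - y * (q * z) := by rw [eq_sub_of_add_eq hy, sub_mul, mul_assoc]
    _ = y * z * q := by rw [eq_sub_of_add_eq hz, mul_sub, sub_sub_cancel, mul_assoc]

theorem map_mul_mul_mul_eq_zero (τ : R →+ M) (hτ : ∀ x y, τ (x * y) = τ (y * x))
    {p q y₁ y₂ y₃ : R} (hpq : p * q = 0) (hy₁ : q * y₁ + y₁ * q = y₁)
    (hy₂ : q * y₂ + y₂ * q = y₂) (hy₃ : q * (y₃ * p) = y₃ * p) :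
    τ (p * (y₁ * y₂ * y₃)) = 0 := by
  have hfix : y₁ * y₂ * y₃ * p = q * (y₁ * y₂ * y₃ * p) :=
    calc y₁ * y₂ * y₃ * p = y₁ * y₂ * (q * (y₃ * p)) := by rw [hy₃]; simp only [mul_assoc]
      _ = q * (y₁ * y₂) * (y₃ * p) := by
        rw [(commute_mul_of_mul_add_mul_eq hy₁ hy₂).eq]; simp only [mul_assoc]
      _ = q * (y₁ * y₂ * y₃ * p) := by simp only [mul_assoc]
  rw [hτ, hfix, hτ, mul_assoc _ p, hpq, mul_zero, map_zero]

theorem map_mul_mul_add_map_mul_mul_eq_sub (τ : R →+ M) (hτ : ∀ x y, τ (x * y) = τ (y * x))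
    {p q : R} (hpq : p * q = 0) (hq : IsIdempotentElem q) {X Y : ι → R}
    (hXY : ∀ a, p * Y a + X a * q = 0) (hYX : ∀ a, q * X a + Y a * p = 0)
    (hX : ∀ a, p * X a + X a * p = X a) (hY : ∀ a, q * Y a + Y a * q = Y a) (a b c : ι) :
    τ (X a * Y b * Y c) + τ (Y b * X c * X a) =
      τ (q * Y b * X c * X a) - τ (q * Y c * X a * X b) := by
  have hpY : ∀ a, p * Y a = -(X a * q) := fun a => eq_neg_of_add_eq_zero_left (hXY a)
  have hXq : ∀ a, X a * q = -(p * Y a) := fun a => eq_neg_of_add_eq_zero_right (hXY a)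
  have hYp : ∀ a, Y a * p = -(q * X a) := fun a => eq_neg_of_add_eq_zero_right (hYX a)
  have hqYp : q * (Y c * p) = Y c * p := by rw [hYp, mul_neg, ← mul_assoc, hq.eq]
  have hsplit : X a * Y b * Y c =
      X a * q * Y b * Y c + p * X a * (Y b * q) * Y c + X a * p * (Y b * q) * Y c :=
    calc X a * Y b * Y c = X a * q * Y b * Y c + X a * (Y b * q) * Y c := by
          conv_lhs => rw [← hY b]
          noncomm_ring
      _ = X a * q * Y b * Y c + (p * X a + X a * p) * (Y b * q) * Y c := by rw [hX a]
      _ = _ := by noncomm_ring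
  have h₁ : τ (X a * q * Y b * Y c) = 0 := by
    rw [hXq, neg_mul, neg_mul, map_neg, mul_assoc p, mul_assoc p,
      map_mul_mul_mul_eq_zero τ hτ hpq (hY a) (hY b) hqYp, neg_zero]
  have h₂ : τ (p * X a * (Y b * q) * Y c) =
      -τ (Y b * X c * X a) + τ (q * Y b * X c * X a) :=
    calc τ (p * X a * (Y b * q) * Y c) = τ (q * Y c * (p * X a * Y b)) := by
          rw [← hτ (p * X a * Y b)]; simp only [mul_assoc]
      _ = τ (q * (Y c * p) * (X a * Y b)) := by simp only [mul_assoc]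
      _ = -τ (q * X c * X a * Y b) := by
          rw [hqYp, hYp]; simp only [neg_mul, map_neg, mul_assoc]
      _ = -τ (Y b * q * X c * X a) := by rw [hτ (q * X c * X a)]; simp only [mul_assoc]
      _ = -τ (Y b * X c * X a) + τ (q * Y b * X c * X a) := by
          rw [eq_sub_of_add_eq' (hY b)]; simp only [sub_mul, map_sub]; abel
  have h₃ : τ (X a * p * (Y b * q) * Y c) = -τ (q * Y c * X a * X b) :=
    calc τ (X a * p * (Y b * q) * Y c) = τ (X a * (p * Y b) * q * Y c) := by simp only [mul_assoc]
      _ = -τ (X a * X b * (q * q) * Y c) := by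
          rw [hpY]; simp only [mul_neg, neg_mul, map_neg, mul_assoc]
      _ = -τ (q * Y c * X a * X b) := by
          rw [hq.eq, mul_assoc (X a * X b), hτ (X a * X b)]; simp only [mul_assoc]
  rw [hsplit, map_add, map_add, h₁, h₂, h₃]
  abel

theorem alt3_map_mul_eq_neg (τ : R →+ ℂ)
    (hτ : ∀ x y, τ (x * y) = τ (y * x)) {p q : R} (hpq : p * q = 0) (hq : IsIdempotentElem q)
    {X Y : ι → R} (hXY : ∀ a, p * Y a + X a * q = 0) (hYX : ∀ a, q * X a + Y a * p = 0)
    (hX : ∀ a, p * X a + X a * p = X a) (hY : ∀ a, q * Y a + Y a * q = Y a) (u v w : ι) :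
    alt3 (fun a b c => τ (X a * Y b * Y c)) u v w =
      -alt3 (fun a b c => τ (Y a * X b * X c)) u v w :=
  alt3_eq_neg_of_add_cycle (map_mul_mul_add_map_mul_mul_eq_sub τ hτ hpq hq hXY hYX hX hY) u v w

end TraceIdentities

theorem mul_fderiv_add_fderiv_mul_eq_fderiv {𝕜 E 𝔸 : Type*} [NontriviallyNormedField 𝕜]
    [NormedAddCommGroup E] [NormedSpace 𝕜 E] [NormedRing 𝔸] [NormedAlgebra 𝕜 𝔸]
    {f g h : E → 𝔸} {x : E} (hf : DifferentiableAt 𝕜 f x) (hg : DifferentiableAt 𝕜 g x)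
    (hfg : ∀ y, f y * g y = h y) (a : E) :
    f x * fderiv 𝕜 g x a + fderiv 𝕜 f x a * g x = fderiv 𝕜 h x a := by
  rw [← funext hfg, fderiv_fun_mul' hf hg]
  rfl

theorem three_form_antisymmetry_general
    {E H : Type*} [NormedAddCommGroup E] [NormedSpace ℝ E]
    [NormedAddCommGroup H] [InnerProductSpace ℂ H] [FiniteDimensional ℂ H]
    {n : ℕ} (P : Fin n → E → (H →L[ℂ] H))
    (hPdiff : ∀ i, Differentiable ℝ (P i))
    (horth : ∀ i j m, P i m * P j m = if i = j then P i m else 0)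
    (i k : Fin n) (hik : i ≠ k) (m : E) :
    ∀ u v w : E,
      alt3 (fun a b c => trL ((fderiv ℝ (P i) m a) * (fderiv ℝ (P k) m b) *
        (fderiv ℝ (P k) m c))) u v w =
      - alt3 (fun a b c => trL ((fderiv ℝ (P k) m a) * (fderiv ℝ (P i) m b) *
        (fderiv ℝ (P i) m c))) u v w := by
  have leibniz (j l : Fin n) (a : E) := mul_fderiv_add_fderiv_mul_eq_fderiv
    (hPdiff j m) (hPdiff l m) (horth j l) a
  have hd_ne (j l : Fin n) (hjl : j ≠ l) (a : E) :
      P j m * fderiv ℝ (P l) m a + fderiv ℝ (P j) m a * P l m = 0 := by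
    simpa [hjl] using leibniz j l a
  have hd_self (j : Fin n) (a : E) :
      P j m * fderiv ℝ (P j) m a + fderiv ℝ (P j) m a * P j m = fderiv ℝ (P j) m a := by
    simpa using leibniz j j a
  exact alt3_map_mul_eq_neg (AddMonoidHom.mk' trL fun A B => by simp [trL])
    (fun A B => LinearMap.trace_mul_comm ℂ (A : H →ₗ[ℂ] H) B)
    (by simpa [hik] using horth i k m) (by simpa [IsIdempotentElem] using horth k k m)
    (hd_ne i k hik) (hd_ne k i hik.symm) (hd_self i) (hd_self k)

/-- For smooth mutually orthogonal projections summing to `1` and `i ≠ k`,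
the 3-forms satisfy `tr(dPᵢ dPₖ dPₖ) = - tr(dPₖ dPᵢ dPᵢ)`. -/
theorem three_form_antisymmetry
    {E H : Type*} [NormedAddCommGroup E] [NormedSpace ℝ E]
    [NormedAddCommGroup H] [InnerProductSpace ℂ H] [FiniteDimensional ℂ H]
    {n : ℕ} (P : Fin n → E → (H →L[ℂ] H))
    (hPdiff : ∀ i, Differentiable ℝ (P i))
    (hsa : ∀ i m, IsSelfAdjoint (P i m))
    (horth : ∀ i j m, P i m * P j m = if i = j then P i m else 0)
    (hsum : ∀ m, ∑ i, P i m = 1)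
    (i k : Fin n) (hik : i ≠ k) (m : E) :
    ∀ u v w : E,
      alt3 (fun a b c => trL ((fderiv ℝ (P i) m a) * (fderiv ℝ (P k) m b) *
        (fderiv ℝ (P k) m c))) u v w =
      - alt3 (fun a b c => trL ((fderiv ℝ (P k) m a) * (fderiv ℝ (P i) m b) *
        (fderiv ℝ (P i) m c))) u v w :=
  three_form_antisymmetry_general P hPdiff horth i k hik m
end
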